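/- For α > 0 and f measurable on (0,∞) with absolutely convergent integrals, the left-sided composition formula I^α_{+,2}( s^{1-2α} (I^α_{+,2} f)(s) )(t) = 2^{2α} (I^{2α}_+ ( s f(s) ))(t) holds for almost all t > 0. -/

import Mathlib

/-!
Written out, the left side is an iterated integral over `0 < x ≤ r ≤ t`; exchanging the order
of integration (Fubini, justified by the absolute-convergence hypothesis) reduces the claim to
the kernel identity
`∫_x^t r^(2-2α) (t²-r²)^(α-1) (r²-x²)^(α-1) dr = 2^(2α-2) B(α,α) (t-x)^(2α-1)`.
Under `w = r - xt/r` the integrand becomes `(A²-w²)^(α-1)` with `A = t - x`, while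
`dw = (1 + xt/r²) dr`. The inversion `r ↦ xt/r` maps `(x, t)` onto itself and changes the sign
of `w`, so averaging the two parametrisations removes the Jacobian: the kernel is half of
`∫_{-A}^{A} (A²-w²)^(α-1) dw = (2A)^(2α-1) B(α,α)`.
-/

open MeasureTheory Real Set

/-- Left-sided modified Erdélyi–Kober fractional integral of order `α`. -/
noncomputable def EKplus (α : ℝ) (f : ℝ → ℝ) (t : ℝ) : ℝ :=
  2 * (Real.Gamma α)⁻¹ * ∫ s in Ioc (0 : ℝ) t, f s * s * (t ^ 2 - s ^ 2) ^ (α - 1)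

/-- Left-sided Riemann–Liouville fractional integral of order `α`. -/
noncomputable def RLplus (α : ℝ) (g : ℝ → ℝ) (t : ℝ) : ℝ :=
  (Real.Gamma α)⁻¹ * ∫ s in Ioc (0 : ℝ) t, g s * (t - s) ^ (α - 1)

lemma lintegral_rpow_mul_one_sub_rpow {a b : ℝ} (ha : 0 < a) (hb : 0 < b) :
    ∫⁻ x in Ioo (0 : ℝ) 1, ENNReal.ofReal (x ^ (a - 1) * (1 - x) ^ (b - 1)) =
      ENNReal.ofReal (ProbabilityTheory.beta a b) := by
  have hB := ProbabilityTheory.beta_pos ha hb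
  have h := ProbabilityTheory.lintegral_betaPDF_eq_one ha hb
  simp_rw [ProbabilityTheory.lintegral_betaPDF, mul_assoc,
    ENNReal.ofReal_mul (one_div_pos.2 hB).le] at h
  rw [lintegral_const_mul' _ _ ENNReal.ofReal_ne_top] at h
  rw [← mul_one (ENNReal.ofReal _), ← h, ← mul_assoc, ← ENNReal.ofReal_mul hB.le,
    mul_one_div_cancel hB.ne', ENNReal.ofReal_one, one_mul]

lemma rpow_mul_one_sub_rpow_nonneg {a b x : ℝ} (hx : x ∈ Ioo (0 : ℝ) 1) :
    0 ≤ x ^ (a - 1) * (1 - x) ^ (b - 1) :=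
  mul_nonneg (rpow_nonneg hx.1.le _) (rpow_nonneg (by linarith [hx.2]) _)

lemma integrableOn_rpow_mul_one_sub_rpow {a b : ℝ} (ha : 0 < a) (hb : 0 < b) :
    IntegrableOn (fun x : ℝ => x ^ (a - 1) * (1 - x) ^ (b - 1)) (Ioo 0 1) := by
  refine ⟨by fun_prop, (hasFiniteIntegral_iff_ofReal ?_).2 ?_⟩
  · exact ae_restrict_of_forall_mem measurableSet_Ioo fun _ hx => rpow_mul_one_sub_rpow_nonneg hx
  · rw [lintegral_rpow_mul_one_sub_rpow ha hb]
    exact ENNReal.ofReal_lt_top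

lemma integral_rpow_mul_one_sub_rpow {a b : ℝ} (ha : 0 < a) (hb : 0 < b) :
    ∫ x in Ioo (0 : ℝ) 1, x ^ (a - 1) * (1 - x) ^ (b - 1) = ProbabilityTheory.beta a b := by
  rw [integral_eq_lintegral_of_nonneg_ae, lintegral_rpow_mul_one_sub_rpow ha hb,
    ENNReal.toReal_ofReal (ProbabilityTheory.beta_pos ha hb).le]
  · exact ae_restrict_of_forall_mem measurableSet_Ioo fun _ hx => rpow_mul_one_sub_rpow_nonneg hx
  · fun_prop

lemma hasDerivWithinAt_mul_add (c d : ℝ) (s : Set ℝ) (u : ℝ) :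
    HasDerivWithinAt (fun u => c * u + d) c s u := by
  simpa using (((hasDerivAt_id' u).const_mul c).add_const d).hasDerivWithinAt

lemma injective_mul_add {c : ℝ} (hc : c ≠ 0) (d : ℝ) :
    Function.Injective (fun u => c * u + d) :=
  fun _ _ h => mul_left_cancel₀ hc (add_right_cancel h)

lemma image_affine_Ioo_zero_one {A : ℝ} (hA : 0 < A) :
    (fun u => 2 * A * u + -A) '' Ioo 0 1 = Ioo (-A) A := by
  rw [image_affine_Ioo (by positivity)]
  congr 1 <;> ring

lemma abs_smul_add_rpow_mul_sub_rpow {a b A u : ℝ} (hA : 0 < A) (hu : u ∈ Ioo (0 : ℝ) 1) :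
    |2 * A| • ((A + (2 * A * u + -A)) ^ (a - 1) * (A - (2 * A * u + -A)) ^ (b - 1)) =
      (2 * A) ^ (a + b - 1) * (u ^ (a - 1) * (1 - u) ^ (b - 1)) := by
  have h2A : 0 < 2 * A := by positivity
  have hleft : A + (2 * A * u + -A) = 2 * A * u := by ring
  have hright : A - (2 * A * u + -A) = 2 * A * (1 - u) := by ring
  rw [hleft, hright, smul_eq_mul, abs_of_pos h2A, mul_rpow h2A.le hu.1.le,
    mul_rpow h2A.le (by linarith [hu.2]), show a + b - 1 = 1 + (a - 1) + (b - 1) by ring,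
    rpow_add h2A, rpow_add h2A, rpow_one]
  ring

lemma integrableOn_add_rpow_mul_sub_rpow {a b A : ℝ} (ha : 0 < a) (hb : 0 < b) (hA : 0 < A) :
    IntegrableOn (fun w => (A + w) ^ (a - 1) * (A - w) ^ (b - 1)) (Ioo (-A) A) := by
  rw [← image_affine_Ioo_zero_one hA, integrableOn_image_iff_integrableOn_abs_deriv_smul
    measurableSet_Ioo (fun u _ => hasDerivWithinAt_mul_add _ _ _ u)
    (injective_mul_add (by positivity) _).injOn]
  exact IntegrableOn.congr_fun ((integrableOn_rpow_mul_one_sub_rpow ha hb).const_mul _)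
    (fun u hu => (abs_smul_add_rpow_mul_sub_rpow hA hu).symm) measurableSet_Ioo

lemma integral_add_rpow_mul_sub_rpow {a b A : ℝ} (ha : 0 < a) (hb : 0 < b) (hA : 0 < A) :
    ∫ w in Ioo (-A) A, (A + w) ^ (a - 1) * (A - w) ^ (b - 1) =
      (2 * A) ^ (a + b - 1) * ProbabilityTheory.beta a b := by
  rw [← image_affine_Ioo_zero_one hA, integral_image_eq_integral_abs_deriv_smul
    measurableSet_Ioo (fun u _ => hasDerivWithinAt_mul_add _ _ _ u)
    (injective_mul_add (by positivity) _).injOn,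
    setIntegral_congr_fun measurableSet_Ioo fun u hu => abs_smul_add_rpow_mul_sub_rpow hA hu,
    integral_const_mul, integral_rpow_mul_one_sub_rpow ha hb]

section

variable {s t : ℝ}

lemma hasDerivAt_sub_div (P : ℝ) {r : ℝ} (hr : r ≠ 0) :
    HasDerivAt (fun x => x - P / x) (1 + P / r ^ 2) r := by
  simpa only [div_eq_mul_inv, mul_neg, sub_neg_eq_add] using
    (hasDerivAt_id' r).fun_sub ((hasDerivAt_inv hr).const_mul P)

lemma hasDerivAt_div (P : ℝ) {r : ℝ} (hr : r ≠ 0) :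
    HasDerivAt (fun x => P / x) (-(P / r ^ 2)) r := by
  simpa only [div_eq_mul_inv, mul_neg] using (hasDerivAt_inv hr).const_mul P

lemma strictMonoOn_sub_div {P : ℝ} (hP : 0 < P) : StrictMonoOn (fun x => x - P / x) (Ioi 0) :=
  fun _ hx _ _ hxy => sub_lt_sub hxy (div_lt_div_of_pos_left hP hx hxy)

lemma image_sub_mul_div_Ioo (hs : 0 < s) (hst : s < t) :
    (fun r => r - s * t / r) '' Ioo s t = Ioo (-(t - s)) (t - s) := by
  have ht : 0 < t := hs.trans hst
  have hmono := strictMonoOn_sub_div (mul_pos hs ht)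
  have hleft : s - s * t / s = -(t - s) := by field_simp; ring
  have hright : t - s * t / t = t - s := by field_simp
  refine Subset.antisymm ?_ ?_
  · rintro _ ⟨r, hr, rfl⟩
    have hr0 : (0 : ℝ) < r := hs.trans hr.1
    exact ⟨hleft ▸ hmono hs hr0 hr.1, hright ▸ hmono hr0 ht hr.2⟩
  · have hcont : ContinuousOn (fun r => r - s * t / r) (Icc s t) :=
      continuousOn_id.sub (continuousOn_const.div continuousOn_id
        fun r hr => (hs.trans_le hr.1).ne')
    simpa only [hleft, hright] using intermediate_value_Ioo hst.le hcont

lemma image_mul_div_Ioo (hs : 0 < s) (hst : s < t) :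
    (fun r => s * t / r) '' Ioo s t = Ioo s t := by
  have hmaps : MapsTo (fun r => s * t / r) (Ioo s t) (Ioo s t) := by
    rintro r ⟨hsr, hrt⟩
    have hr0 : 0 < r := hs.trans hsr
    exact ⟨by rw [lt_div_iff₀ hr0]; nlinarith, by rw [div_lt_iff₀ hr0]; nlinarith⟩
  refine Subset.antisymm hmaps.image_subset fun r hr => ⟨s * t / r, hmaps hr, ?_⟩
  exact div_div_cancel₀ (mul_pos hs (hs.trans hst)).ne'

lemma integral_comp_sub_mul_div_of_even {E : Type*} [NormedAddCommGroup E] [NormedSpace ℝ E]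
    (hs : 0 < s) (hst : s < t) {g : ℝ → E} (hg : ∀ w, g (-w) = g w)
    (hgi : IntegrableOn g (Ioo (-(t - s)) (t - s))) :
    ∫ r in Ioo s t, g (r - s * t / r) =
      (2 : ℝ)⁻¹ • ∫ w in Ioo (-(t - s)) (t - s), g w := by
  set P := s * t
  have hP : 0 < P := mul_pos hs (hs.trans hst)
  have hr0 : ∀ r ∈ Ioo s t, r ≠ 0 := fun r hr => (hs.trans hr.1).ne'
  have hjac : ∀ r : ℝ, |1 + P / r ^ 2| = 1 + P / r ^ 2 := fun r => abs_of_pos (by positivity)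
  have hw' : ∀ r ∈ Ioo s t, HasDerivWithinAt (fun x => x - P / x) (1 + P / r ^ 2) (Ioo s t) r :=
    fun r hr => (hasDerivAt_sub_div P (hr0 r hr)).hasDerivWithinAt
  have hw_inj : InjOn (fun x => x - P / x) (Ioo s t) :=
    (strictMonoOn_sub_div hP).injOn.mono fun r hr => hs.trans hr.1
  have hρ' : ∀ r ∈ Ioo s t, HasDerivWithinAt (fun x => P / x) (-(P / r ^ 2)) (Ioo s t) r :=
    fun r hr => (hasDerivAt_div P (hr0 r hr)).hasDerivWithinAt
  have hρ_inj : InjOn (fun x => P / x) (Ioo s t) :=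
    fun x _ y _ hxy => by simpa only [div_div_cancel₀ hP.ne'] using congrArg (P / ·) hxy
  have hJ : IntegrableOn (fun r => (1 + P / r ^ 2) • g (r - P / r)) (Ioo s t) := by
    rw [← image_sub_mul_div_Ioo hs hst,
      integrableOn_image_iff_integrableOn_abs_deriv_smul measurableSet_Ioo hw' hw_inj] at hgi
    simpa only [hjac] using hgi
  have hJ_eq : ∫ w in Ioo (-(t - s)) (t - s), g w =
      ∫ r in Ioo s t, (1 + P / r ^ 2) • g (r - P / r) := by
    rw [← image_sub_mul_div_Ioo hs hst,
      integral_image_eq_integral_abs_deriv_smul measurableSet_Ioo hw' hw_inj]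
    simp only [hjac]
  have hI : IntegrableOn (fun r => g (r - P / r)) (Ioo s t) := by
    have hbdd : ∀ r : ℝ, ‖(1 + P / r ^ 2)⁻¹‖ ≤ 1 := fun r => by
      rw [norm_inv, Real.norm_of_nonneg (by positivity)]
      exact inv_le_one_of_one_le₀ (le_add_of_nonneg_right (by positivity))
    have h := Integrable.bdd_smul hJ 1 (φ := fun r => (1 + P / r ^ 2)⁻¹)
      (by fun_prop : Measurable _).aestronglyMeasurable (ae_of_all _ hbdd)
    exact IntegrableOn.congr_fun h (fun r _ => inv_smul_smul₀ (by positivity) _)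
      measurableSet_Ioo
  have hrefl :
      ∫ r in Ioo s t, g (r - P / r) = ∫ r in Ioo s t, (P / r ^ 2) • g (r - P / r) := by
    conv_lhs => rw [← image_mul_div_Ioo hs hst,
      integral_image_eq_integral_abs_deriv_smul measurableSet_Ioo hρ' hρ_inj]
    refine setIntegral_congr_fun measurableSet_Ioo fun r hr => ?_
    rw [abs_neg, abs_of_pos (div_pos hP (pow_pos (hs.trans hr.1) 2)), div_div_cancel₀ hP.ne',
      ← neg_sub, hg]
  have hsplit : ∫ r in Ioo s t, (P / r ^ 2) • g (r - P / r) =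
      (∫ r in Ioo s t, (1 + P / r ^ 2) • g (r - P / r)) - ∫ r in Ioo s t, g (r - P / r) := by
    rw [← integral_sub hJ hI]
    simp only [add_smul, one_smul, add_sub_cancel_left]
  have htwice : (2 : ℝ) • ∫ r in Ioo s t, g (r - P / r) =
      ∫ r in Ioo s t, (1 + P / r ^ 2) • g (r - P / r) := by
    rw [two_smul]
    nth_rewrite 2 [hrefl]
    rw [hsplit, add_sub_cancel]
  rw [hJ_eq, ← htwice, smul_smul, inv_mul_cancel₀ two_ne_zero, one_smul]

lemma rpow_mul_rpow_eq_add_rpow_mul_sub_rpow (α : ℝ) (hs : 0 < s) {r : ℝ}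
    (hr : r ∈ Ioo s t) :
    r ^ (1 - 2 * α) * r * (t ^ 2 - r ^ 2) ^ (α - 1) * (r ^ 2 - s ^ 2) ^ (α - 1) =
      ((t - s) + (r - s * t / r)) ^ (α - 1) * ((t - s) - (r - s * t / r)) ^ (α - 1) := by
  obtain ⟨hsr, hrt⟩ := hr
  have hr0 : 0 < r := hs.trans hsr
  have hplus : (t - s) + (r - s * t / r) = (r - s) * (r + t) / r := by field_simp; ring
  have hminus : (t - s) - (r - s * t / r) = (t - r) * (r + s) / r := by field_simp; ring
  have hprod : (r - s) * (r + t) / r * ((t - r) * (r + s) / r) =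
      (t ^ 2 - r ^ 2) * (r ^ 2 - s ^ 2) / r ^ 2 := by field_simp; ring
  have hr2 : (r ^ 2) ^ (α - 1) = (r ^ (1 - 2 * α) * r)⁻¹ := by
    rw [← rpow_natCast_mul hr0.le, ← rpow_add_one hr0.ne', ← rpow_neg hr0.le]
    congr 1
    push_cast
    ring
  rw [hplus, hminus, ← mul_rpow (div_nonneg (by nlinarith) hr0.le)
      (div_nonneg (by nlinarith) hr0.le), hprod,
    div_rpow (mul_nonneg (by nlinarith) (by nlinarith)) (sq_nonneg r), hr2,
    mul_rpow (by nlinarith) (by nlinarith)]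
  field_simp

lemma integral_Icc_erdelyiKober_composition_kernel {α : ℝ} (hα : 0 < α) (hs : 0 < s)
    (hst : s < t) :
    ∫ r in Icc s t,
        r ^ (1 - 2 * α) * r * (t ^ 2 - r ^ 2) ^ (α - 1) * (r ^ 2 - s ^ 2) ^ (α - 1) =
      2 ^ (2 * α - 2) * ProbabilityTheory.beta α α * (t - s) ^ (2 * α - 1) := by
  have hA : 0 < t - s := sub_pos.2 hst
  have heven : ∀ w, ((t - s) + -w) ^ (α - 1) * ((t - s) - -w) ^ (α - 1) =
      ((t - s) + w) ^ (α - 1) * ((t - s) - w) ^ (α - 1) := fun w => by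
    rw [mul_comm, sub_neg_eq_add, ← sub_eq_add_neg]
  rw [integral_Icc_eq_integral_Ioo, setIntegral_congr_fun measurableSet_Ioo
      fun r hr => rpow_mul_rpow_eq_add_rpow_mul_sub_rpow α hs hr,
    integral_comp_sub_mul_div_of_even hs hst heven
      (integrableOn_add_rpow_mul_sub_rpow hα hα hA),
    integral_add_rpow_mul_sub_rpow hα hα hA, smul_eq_mul, ← two_mul,
    mul_rpow zero_le_two hA.le, rpow_sub_one two_ne_zero, rpow_sub two_pos (2 * α) 2, rpow_two]
  field_simp

end

lemma integral_Ioc_integral_Ioc_swap {E : Type*} [NormedAddCommGroup E] [NormedSpace ℝ E]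
    {F : ℝ → ℝ → E} {a b : ℝ} (hF : StronglyMeasurable (Function.uncurry F))
    (hfin : ∫⁻ r in Ioc a b, ∫⁻ x in Ioc a r, ‖F r x‖ₑ < ⊤) :
    ∫ r in Ioc a b, ∫ x in Ioc a r, F r x = ∫ x in Ioc a b, ∫ r in Icc x b, F r x := by
  set G : ℝ → ℝ → E := fun r x =>
    {p : ℝ × ℝ | p.2 ≤ p.1}.indicator (Function.uncurry F) (r, x)
  have hG : StronglyMeasurable (Function.uncurry G) :=
    hF.indicator (measurableSet_le measurable_snd measurable_fst)
  have hG_left : ∀ r, G r = (Iic r).indicator (F r) := fun _ => rfl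
  have hG_right : ∀ x, (fun r => G r x) = (Ici x).indicator (fun r => F r x) := fun _ => rfl
  have hslice_left : ∀ r ∈ Ioc a b, Ioc a b ∩ Iic r = Ioc a r := fun r hr => by
    rw [Ioc_inter_Iic, inf_eq_right.2 hr.2]
  have hslice_right : ∀ x ∈ Ioc a b, Ioc a b ∩ Ici x = Icc x b := fun x hx => by
    ext r
    simp only [mem_inter_iff, mem_Ioc, mem_Ici, mem_Icc]
    exact ⟨fun h => ⟨h.2, h.1.2⟩, fun h => ⟨⟨hx.1.trans_le h.1, h.2⟩, h.1⟩⟩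
  have hGint : Integrable (Function.uncurry G)
      ((volume.restrict (Ioc a b)).prod (volume.restrict (Ioc a b))) := by
    refine ⟨hG.aestronglyMeasurable, ?_⟩
    rw [hasFiniteIntegral_def, lintegral_prod _ hG.aestronglyMeasurable.enorm]
    refine lt_of_eq_of_lt (setLIntegral_congr_fun measurableSet_Ioc fun r hr => ?_) hfin
    simp only [Function.uncurry_apply_pair, hG_left, enorm_indicator_eq_indicator_enorm,
      setLIntegral_indicator measurableSet_Iic]
    rw [inter_comm, hslice_left r hr]
  calc ∫ r in Ioc a b, ∫ x in Ioc a r, F r x = ∫ r in Ioc a b, ∫ x in Ioc a b, G r x :=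
        setIntegral_congr_fun measurableSet_Ioc fun r hr => by
          rw [hG_left, setIntegral_indicator measurableSet_Iic, hslice_left r hr]
    _ = ∫ x in Ioc a b, ∫ r in Ioc a b, G r x := integral_integral_swap hGint
    _ = ∫ x in Ioc a b, ∫ r in Icc x b, F r x :=
        setIntegral_congr_fun measurableSet_Ioc fun x hx => by
          rw [hG_right, setIntegral_indicator measurableSet_Ici, hslice_right x hx]

section Composition

variable {α : ℝ} {f : ℝ → ℝ} {t : ℝ}

noncomputable def EKplusCompIntegrand (α : ℝ) (f : ℝ → ℝ) (t r x : ℝ) : ℝ :=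
  r ^ (1 - 2 * α) * r * (t ^ 2 - r ^ 2) ^ (α - 1) * (f x * x * (r ^ 2 - x ^ 2) ^ (α - 1))

lemma EKplus_comp_eq_integral_integral (α : ℝ) (f : ℝ → ℝ) (t : ℝ) :
    EKplus α (fun s => s ^ (1 - 2 * α) * EKplus α f s) t =
      (2 * (Real.Gamma α)⁻¹) ^ 2 *
        ∫ r in Ioc 0 t, ∫ x in Ioc 0 r, EKplusCompIntegrand α f t r x := by
  simp only [EKplus, EKplusCompIntegrand, integral_const_mul]
  rw [← integral_const_mul, ← integral_const_mul]
  refine setIntegral_congr_fun measurableSet_Ioc fun r _ => ?_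
  ring

lemma measurable_uncurry_EKplusCompIntegrand (hf : Measurable f) :
    Measurable (Function.uncurry (EKplusCompIntegrand α f t)) := by
  unfold EKplusCompIntegrand Function.uncurry
  fun_prop

lemma lintegral_lintegral_enorm_EKplusCompIntegrand (α : ℝ) (f : ℝ → ℝ) (t : ℝ) :
    ∫⁻ r in Ioc 0 t, ∫⁻ x in Ioc 0 r, ‖EKplusCompIntegrand α f t r x‖ₑ =
      ∫⁻ r in Ioc 0 t, ENNReal.ofReal (r ^ (1 - 2 * α) * r * (t ^ 2 - r ^ 2) ^ (α - 1)) *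
        ∫⁻ x in Ioc 0 r, ENNReal.ofReal (|f x| * x * (r ^ 2 - x ^ 2) ^ (α - 1)) := by
  refine setLIntegral_congr_fun measurableSet_Ioc fun r hr => ?_
  rw [← lintegral_const_mul' _ _ ENNReal.ofReal_ne_top]
  refine setLIntegral_congr_fun measurableSet_Ioc fun x hx => ?_
  have hW : 0 ≤ r ^ (1 - 2 * α) * r * (t ^ 2 - r ^ 2) ^ (α - 1) :=
    mul_nonneg (mul_nonneg (rpow_nonneg hr.1.le _) hr.1.le)
      (rpow_nonneg (by nlinarith [hr.1, hr.2]) _)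
  rw [EKplusCompIntegrand, enorm_mul, Real.enorm_of_nonneg hW, Real.enorm_eq_ofReal_abs, abs_mul,
    abs_mul, abs_of_nonneg hx.1.le, abs_of_nonneg (rpow_nonneg (by nlinarith [hx.1, hx.2]) _)]

lemma integral_Icc_EKplusCompIntegrand (hα : 0 < α) {x : ℝ} (hx : 0 < x) (hxt : x < t) :
    ∫ r in Icc x t, EKplusCompIntegrand α f t r x =
      2 ^ (2 * α - 2) * ProbabilityTheory.beta α α * (x * f x * (t - x) ^ (2 * α - 1)) := by
  calc ∫ r in Icc x t, EKplusCompIntegrand α f t r x = x * f x * ∫ r in Icc x t,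
        r ^ (1 - 2 * α) * r * (t ^ 2 - r ^ 2) ^ (α - 1) * (r ^ 2 - x ^ 2) ^ (α - 1) := by
        rw [← integral_const_mul]
        congr 1 with r
        rw [EKplusCompIntegrand]
        ring
    _ = _ := by
        rw [integral_Icc_erdelyiKober_composition_kernel hα hx hxt]
        ring

end Composition

/-- The left-sided composition formula
`I^α_{+,2}( s^{1-2α} (I^α_{+,2} f)(s) )(t) = 2^{2α} (I^{2α}_+ ( s f(s) ))(t)` for a.e. `t > 0`,
provided all integrals converge absolutely. -/
theorem ek_plus_composition_rl (α : ℝ) (hα : 0 < α) (f : ℝ → ℝ)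
    (hmeas : Measurable f)
    (habs : ∀ t > (0 : ℝ),
      ∫⁻ r in Ioc (0 : ℝ) t,
        ENNReal.ofReal (r ^ (1 - 2 * α) * r * (t ^ 2 - r ^ 2) ^ (α - 1)) *
          (∫⁻ s in Ioc (0 : ℝ) r, ENNReal.ofReal (|f s| * s * (r ^ 2 - s ^ 2) ^ (α - 1))) < ⊤) :
    ∀ᵐ t ∂(volume.restrict (Ioi (0 : ℝ))),
      EKplus α (fun s => s ^ (1 - 2 * α) * EKplus α f s) t
        = 2 ^ (2 * α) * RLplus (2 * α) (fun s => s * f s) t := by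
  filter_upwards [ae_restrict_mem measurableSet_Ioi] with t (ht : 0 < t)
  have hswap := integral_Ioc_integral_Ioc_swap
    (measurable_uncurry_EKplusCompIntegrand (α := α) (t := t) hmeas).stronglyMeasurable
    ((lintegral_lintegral_enorm_EKplusCompIntegrand α f t).trans_lt (habs t ht))
  rw [EKplus_comp_eq_integral_integral, hswap, integral_Ioc_eq_integral_Ioo,
    setIntegral_congr_fun measurableSet_Ioo
      fun x hx => integral_Icc_EKplusCompIntegrand hα hx.1 hx.2,
    integral_const_mul, RLplus, integral_Ioc_eq_integral_Ioo, ProbabilityTheory.beta, ← two_mul,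
    rpow_sub two_pos, rpow_two]
  field_simp
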